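/- arXiv:2408.02101 — 5 statements merged into one kernel-verified Lean document; each statement's English description precedes it below -/
import Mathlib

section
/- Let S ⊆ ℝⁿ be any set, let c₁, …, c_K ∈ ℝⁿ be a finite family of vectors, and let d ∈ ℝⁿ be a nonnegative linear combination of the c_k, i.e. d = Σ_{k=1}^K a_k c_k with all a_k ≥ 0. Then the efficient set of the extended family (c₁, …, c_K, d) over S equals the efficient set of the family (c₁, …, c_K) over S. -/
/-! Efficiency only depends on the strict componentwise order of objective vectors
`(c k ⬝ᵥ x)ₖ`. Writing `d = ∑ aₖ cₖ`, the extra objective is the monotone function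
`a ⬝ᵥ ·` of the old objective vector, so it can never break a domination among the old
objectives, and it can never create one on its own: if the old objectives tie, so does the
new one. -/

open Matrix

/-- A point `x` is efficient (Pareto optimal) for the family of linear objectives
`y ↦ c k ⬝ᵥ y` over `S` if `x ∈ S` and no `y ∈ S` dominates it. -/
def Efficient {n K : ℕ} (S : Set (Fin n → ℝ)) (c : Fin K → (Fin n → ℝ))
    (x : Fin n → ℝ) : Prop :=
  x ∈ S ∧ ¬ ∃ y ∈ S, (∀ k, c k ⬝ᵥ x ≤ c k ⬝ᵥ y) ∧ ∃ k₀, c k₀ ⬝ᵥ x < c k₀ ⬝ᵥ y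

theorem Fin.snoc_lt_snoc_iff_of_monotone {K : ℕ} {β : Type*} [Preorder β]
    {φ : (Fin K → β) → β} (hφ : Monotone φ) {f g : Fin K → β} :
    Fin.snoc f (φ f) < (Fin.snoc g (φ g) : Fin (K + 1) → β) ↔ f < g := by
  refine ((Fin.snocOrderIso fun _ => β).lt_iff_lt (x := (φ f, f)) (y := (φ g, g))).trans ?_
  rw [Prod.lt_iff]
  refine ⟨?_, fun hfg => Or.inr ⟨hφ hfg.le, hfg⟩⟩
  rintro (⟨hφlt, hle⟩ | ⟨-, hlt⟩)
  · exact lt_of_le_not_ge hle fun hge => (hφ hge).not_gt hφlt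
  · exact hlt

theorem Matrix.snoc_dotProduct {R ι : Type*} [Fintype ι] [Mul R] [AddCommMonoid R] {K : ℕ}
    (c : Fin K → ι → R) (d x : ι → R) :
    (fun k => Fin.snoc (α := fun _ => ι → R) c d k ⬝ᵥ x) =
      Fin.snoc (fun k => c k ⬝ᵥ x) (d ⬝ᵥ x) :=
  Fin.comp_snoc (· ⬝ᵥ x) c d

theorem Matrix.sum_smul_dotProduct {R ι κ : Type*} [CommSemiring R] [Fintype ι] [Fintype κ]
    (a : κ → R) (c : κ → ι → R) (x : ι → R) :
    (∑ k, a k • c k) ⬝ᵥ x = a ⬝ᵥ fun k => c k ⬝ᵥ x := by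
  simp only [sum_dotProduct, smul_dotProduct, smul_eq_mul]
  rfl

theorem efficient_iff_not_exists_lt {n K : ℕ} {S : Set (Fin n → ℝ)}
    {c : Fin K → Fin n → ℝ} {x : Fin n → ℝ} :
    Efficient S c x ↔ x ∈ S ∧ ¬ ∃ y ∈ S, (fun k => c k ⬝ᵥ x) < fun k => c k ⬝ᵥ y := by
  simp only [Efficient, Pi.lt_def, Pi.le_def]

/-- Adjoining a nonnegative linear combination of the objectives does not change
the efficient set. -/
theorem efficient_snoc_nonneg_combination {n K : ℕ} (S : Set (Fin n → ℝ))
    (c : Fin K → (Fin n → ℝ)) (d : Fin n → ℝ)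
    (hd : ∃ a : Fin K → ℝ, (∀ k, 0 ≤ a k) ∧ d = ∑ k, a k • c k) :
    {x | Efficient S (Fin.snoc c d) x} = {x | Efficient S c x} := by
  obtain ⟨a, ha, rfl⟩ := hd
  have hmono : Monotone (a ⬝ᵥ ·) := fun _ _ h => dotProduct_le_dotProduct_of_nonneg_left h ha
  ext x
  simp only [Set.mem_ofPred_eq, efficient_iff_not_exists_lt, snoc_dotProduct, sum_smul_dotProduct,
    Fin.snoc_lt_snoc_iff_of_monotone hmono]
end

section
/- Let S ⊆ ℝ², let K ≥ 2, let c₁, …, c_K ∈ ℝ², and suppose there exist indices k₁, k₂ ∈ {1, …, K} such that every c_k is a nonnegative linear combination of c_{k₁} and c_{k₂}. Then the efficient set of the K-objective family (c₁, …, c_K) over S equals the efficient set of the two-objective family (c_{k₁}, c_{k₂}) over S. -/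
open Matrix

/-!
Whether `y` dominates `x` for the objectives `c k` only depends on the dual cone
`{z | ∀ k, 0 ≤ c k ⬝ᵥ z}`: `y` dominates `x` iff `y - x` lies in it and `x - y` does not.
Hence two families with the same dual cone have the same efficient sets, and the dual cone of a
family does not change when the family is replaced by a subfamily generating the same cone.
-/

open PointedCone

lemma PointedCone.dual_eq_of_subset_of_subset_hull {R M N : Type*} [CommSemiring R]
    [PartialOrder R] [IsOrderedRing R] [AddCommMonoid M] [Module R M] [AddCommMonoid N]
    [Module R N] {p : M →ₗ[R] N →ₗ[R] R} {s t : Set M} (hts : t ⊆ s) (hst : s ⊆ hull R t) :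
    dual p s = dual p t :=
  le_antisymm (dual_anti hts) (dual_hull (p := p) t ▸ dual_anti hst)

section Efficient

variable {n K M : ℕ} {S : Set (Fin n → ℝ)} {x : Fin n → ℝ}

lemma efficient_iff_mem_dual (c : Fin K → Fin n → ℝ) :
    Efficient S c x ↔ x ∈ S ∧ ∀ y ∈ S, y - x ∈ dual (dotProductBilin ℝ ℝ) (Set.range c) →
      x - y ∈ dual (dotProductBilin ℝ ℝ) (Set.range c) := by
  simp only [Efficient, mem_dual, Set.forall_mem_range, dotProductBilin_apply_apply,
    dotProduct_sub, sub_nonneg]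
  push Not
  rfl

lemma efficient_congr {c : Fin K → Fin n → ℝ} {d : Fin M → Fin n → ℝ}
    (h : dual (dotProductBilin ℝ ℝ) (Set.range c) = dual (dotProductBilin ℝ ℝ) (Set.range d)) :
    Efficient S c x ↔ Efficient S d x := by
  rw [efficient_iff_mem_dual, efficient_iff_mem_dual, h]

end Efficient

theorem efficient_eq_two_objective_general {K : ℕ} (S : Set (Fin 2 → ℝ))
    (c : Fin K → (Fin 2 → ℝ)) (k₁ k₂ : Fin K)
    (hcone : ∀ k, ∃ a b : ℝ, 0 ≤ a ∧ 0 ≤ b ∧ c k = a • c k₁ + b • c k₂) :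
    {x | Efficient S c x} = {x | Efficient S ![c k₁, c k₂] x} := by
  have hsub : Set.range ![c k₁, c k₂] ⊆ Set.range c := by
    rw [Set.range_subset_iff]
    intro i
    fin_cases i
    exacts [⟨k₁, rfl⟩, ⟨k₂, rfl⟩]
  have hhull : Set.range c ⊆ hull ℝ (Set.range ![c k₁, c k₂]) := by
    rintro _ ⟨k, rfl⟩
    obtain ⟨a, b, ha, hb, hk⟩ := hcone k
    have h₁ : c k₁ ∈ hull ℝ (Set.range ![c k₁, c k₂]) := subset_hull ⟨0, rfl⟩
    have h₂ : c k₂ ∈ hull ℝ (Set.range ![c k₁, c k₂]) := subset_hull ⟨1, rfl⟩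
    rw [hk, ← Nonneg.mk_smul a ha, ← Nonneg.mk_smul b hb]
    exact add_mem (Submodule.smul_mem _ _ h₁) (Submodule.smul_mem _ _ h₂)
  ext x
  exact efficient_congr (dual_eq_of_subset_of_subset_hull hsub hhull)

/-- Theorem 4.5 (forward): if two of the gradients generate the whole gradient cone,
the `K`-objective problem has the same efficient set as the corresponding
two-objective problem. -/
theorem efficient_eq_two_objective {K : ℕ} (hK : 2 ≤ K) (S : Set (Fin 2 → ℝ))
    (c : Fin K → (Fin 2 → ℝ)) (k₁ k₂ : Fin K)
    (hcone : ∀ k, ∃ a b : ℝ, 0 ≤ a ∧ 0 ≤ b ∧ c k = a • c k₁ + b • c k₂) :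
    {x | Efficient S c x} = {x | Efficient S ![c k₁, c k₂] x} :=
  efficient_eq_two_objective_general S c k₁ k₂ hcone
end

section
/- Let S ⊆ ℝ², let c₁, c₂ ∈ ℝ², and let d₁, …, d_m ∈ ℝ² be vectors each of which is a nonnegative linear combination of c₁ and c₂. Then the efficient set of the family (c₁, c₂, d₁, …, d_m) over S equals the efficient set of the two-objective family (c₁, c₂) over S. -/
open Matrix

/-- Corollary 4.6 / converse of Theorem 4.5: adjoining to the two extreme-ray
generators any gradients lying in their cone leaves the efficient set unchanged. -/
theorem efficient_append_cone_members {m : ℕ} (S : Set (Fin 2 → ℝ))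
    (c₁ c₂ : Fin 2 → ℝ) (d : Fin m → (Fin 2 → ℝ))
    (hd : ∀ l, ∃ a b : ℝ, 0 ≤ a ∧ 0 ≤ b ∧ d l = a • c₁ + b • c₂) :
    {x | Efficient S (Fin.append ![c₁, c₂] d) x} = {x | Efficient S ![c₁, c₂] x} := by
  ext x
  simp only [Set.mem_setOf_eq, Efficient]
  have hdle : ∀ (y : Fin 2 → ℝ) (l : Fin m),
      c₁ ⬝ᵥ x ≤ c₁ ⬝ᵥ y → c₂ ⬝ᵥ x ≤ c₂ ⬝ᵥ y → d l ⬝ᵥ x ≤ d l ⬝ᵥ y := by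
    intro y l h1 h2
    obtain ⟨a, b, ha, hb, hdl⟩ := hd l
    rw [hdl]
    simp only [add_dotProduct, smul_dotProduct, smul_eq_mul]
    gcongr
  constructor
  · rintro ⟨hx, hne⟩
    refine ⟨hx, ?_⟩
    rintro ⟨y, hy, hle, k₀, hlt⟩
    have h1 : c₁ ⬝ᵥ x ≤ c₁ ⬝ᵥ y := by
      have := hle 0; simpa using this
    have h2 : c₂ ⬝ᵥ x ≤ c₂ ⬝ᵥ y := by
      have := hle 1; simpa using this
    apply hne
    refine ⟨y, hy, ?_, Fin.castAdd m k₀, ?_⟩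
    · intro k
      refine Fin.addCases (fun i => ?_) (fun l => ?_) k
      · rw [Fin.append_left]; exact hle i
      · rw [Fin.append_right]; exact hdle y l h1 h2
    · rw [Fin.append_left]; exact hlt
  · rintro ⟨hx, hne⟩
    refine ⟨hx, ?_⟩
    rintro ⟨y, hy, hle, k₀, hlt⟩
    have h1 : c₁ ⬝ᵥ x ≤ c₁ ⬝ᵥ y := by
      have := hle (Fin.castAdd m 0); rwa [Fin.append_left] at this
    have h2 : c₂ ⬝ᵥ x ≤ c₂ ⬝ᵥ y := by
      have := hle (Fin.castAdd m 1); rwa [Fin.append_left] at this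
    have hlek : ∀ k : Fin 2, (![c₁, c₂] : Fin 2 → Fin 2 → ℝ) k ⬝ᵥ x ≤ ![c₁, c₂] k ⬝ᵥ y := by
      intro k; fin_cases k
      · exact h1
      · exact h2
    apply hne
    refine ⟨y, hy, hlek, ?_⟩
    revert hlt
    refine Fin.addCases (fun i => ?_) (fun l => ?_) k₀ <;> intro hlt
    · exact ⟨i, by rwa [Fin.append_left] at hlt⟩
    · rw [Fin.append_right] at hlt
      obtain ⟨a, b, ha, hb, hdl⟩ := hd l
      rw [hdl] at hlt
      simp only [add_dotProduct, smul_dotProduct, smul_eq_mul] at hlt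
      by_cases hc1 : c₁ ⬝ᵥ x < c₁ ⬝ᵥ y
      · exact ⟨0, by simpa using hc1⟩
      · have heq : c₁ ⬝ᵥ x = c₁ ⬝ᵥ y := le_antisymm h1 (not_lt.mp hc1)
        refine ⟨1, ?_⟩
        simp only [Matrix.cons_val_one, Matrix.head_cons, Matrix.cons_val_zero]
        nlinarith
end

section
/- Let S ⊆ ℝ², let K ≥ 1, and let c₁, …, c_K ∈ ℝ² be vectors such that there exists u ∈ ℝ² with ⟨u, c_k⟩ > 0 for all k. Then there exist indices k₁, k₂ ∈ {1, …, K} such that the efficient set of the K-objective family (c₁, …, c_K) over S equals the efficient set of the two-objective family (c_{k₁}, c_{k₂}) over S. -/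
/-!
The efficient set of a family of linear objectives depends only on the convex cone generated by
their gradients: `y` dominates `x` iff `y - x` lies in the dual cone but not in the orthogonal
complement of that cone, and both are determined by the cone. In the plane, a finite set of
vectors in an open half-plane `0 < u ⬝ᵥ w` generates the same cone as its two extreme members,
those of largest and smallest angle from `u`.
-/

open Matrix

open Set PointedCone

section ConeDependence

variable {n : ℕ} {ι κ : Type*} {c : ι → Fin n → ℝ} {d : κ → Fin n → ℝ}

lemma forall_dotProduct_nonneg_iff_of_hull_eq (h : hull ℝ (range c) = hull ℝ (range d))
    (z : Fin n → ℝ) : (∀ i, 0 ≤ c i ⬝ᵥ z) ↔ ∀ j, 0 ≤ d j ⬝ᵥ z := by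
  have hdual :=
    congrArg (fun C : PointedCone ℝ _ ↦ dual (dotProductBilin ℝ ℝ) (C : Set (Fin n → ℝ))) h
  simp only [dual_hull, SetLike.ext_iff] at hdual
  simpa [dotProductBilin] using hdual z

lemma forall_dotProduct_eq_zero_iff_of_hull_eq (h : hull ℝ (range c) = hull ℝ (range d))
    (z : Fin n → ℝ) : (∀ i, c i ⬝ᵥ z = 0) ↔ ∀ j, d j ⬝ᵥ z = 0 := by
  have h₁ := forall_dotProduct_nonneg_iff_of_hull_eq h z
  have h₂ := forall_dotProduct_nonneg_iff_of_hull_eq h (-z)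
  simp only [dotProduct_neg, neg_nonneg] at h₂
  simp only [le_antisymm_iff, forall_and]
  tauto

lemma dominates_iff_of_hull_eq (h : hull ℝ (range c) = hull ℝ (range d)) (x y : Fin n → ℝ) :
    ((∀ i, c i ⬝ᵥ x ≤ c i ⬝ᵥ y) ∧ ∃ i, c i ⬝ᵥ x < c i ⬝ᵥ y) ↔
      ((∀ j, d j ⬝ᵥ x ≤ d j ⬝ᵥ y) ∧ ∃ j, d j ⬝ᵥ x < d j ⬝ᵥ y) := by
  have hle := forall_dotProduct_nonneg_iff_of_hull_eq h (y - x)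
  have heq := forall_dotProduct_eq_zero_iff_of_hull_eq h (x - y)
  simp only [dotProduct_sub, sub_nonneg, sub_eq_zero] at hle heq
  rw [← Pi.le_def (x := fun i ↦ c i ⬝ᵥ x), ← Pi.lt_def, ← Pi.le_def (x := fun j ↦ d j ⬝ᵥ x),
    ← Pi.lt_def]
  simp only [lt_iff_le_and_ne, Pi.le_def, ne_eq, funext_iff, hle, heq]

end ConeDependence

lemma efficient_eq_of_hull_eq {n K m : ℕ} (S : Set (Fin n → ℝ)) {c : Fin K → Fin n → ℝ}
    {d : Fin m → Fin n → ℝ} (h : hull ℝ (range c) = hull ℝ (range d)) :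
    Efficient S c = Efficient S d := by
  funext x
  simp only [Efficient, dominates_iff_of_hull_eq h]

section Plane

def perp (u : Fin 2 → ℝ) : Fin 2 → ℝ := ![-u 1, u 0]

/-- The tangent of the oriented angle from `u` to `w`; on the half-plane `0 < u ⬝ᵥ w` it is a
strictly increasing function of that angle. -/
noncomputable def angleTan (u w : Fin 2 → ℝ) : ℝ := perp u ⬝ᵥ w / u ⬝ᵥ w

variable {u : Fin 2 → ℝ}

lemma smul_lineMap_angleTan {w : Fin 2 → ℝ} (hw : u ⬝ᵥ w ≠ 0) :
    (u ⬝ᵥ w) • AffineMap.lineMap u (u + perp u) (angleTan u w) = (u ⬝ᵥ u) • w := by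
  rw [angleTan, AffineMap.lineMap_apply, vsub_eq_sub, add_sub_cancel_left, vadd_eq_add, smul_add,
    smul_smul, mul_div_cancel₀ _ hw]
  ext i
  fin_cases i <;> simp [perp, dotProduct, Fin.sum_univ_two] <;> ring

-- `t ↦ lineMap u (u + perp u) t` is affine, so the directions with `angleTan` between those of
-- `b` and `a` fill the segment between two positive multiples of `b` and `a`.
lemma mem_hull_pair_of_angleTan_mem_Icc {a b w : Fin 2 → ℝ} (ha : 0 < u ⬝ᵥ a) (hb : 0 < u ⬝ᵥ b)
    (hw : 0 < u ⬝ᵥ w) (hbw : angleTan u b ≤ angleTan u w) (hwa : angleTan u w ≤ angleTan u a) :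
    w ∈ hull ℝ {a, b} := by
  set C := hull ℝ ({a, b} : Set (Fin 2 → ℝ))
  set e := AffineMap.lineMap (k := ℝ) u (u + perp u)
  have huu : 0 < u ⬝ᵥ u := by
    have hu : u ≠ 0 := by rintro rfl; simp at ha
    simpa using dotProduct_star_self_pos_iff.2 hu
  have he_mem {v : Fin 2 → ℝ} (hv : 0 < u ⬝ᵥ v) (hvC : v ∈ C) : e (angleTan u v) ∈ C := by
    rw [← C.smul_mem_iff hv, smul_lineMap_angleTan hv.ne']
    exact C.smul_mem huu.le hvC
  have hseg : e (angleTan u w) ∈ segment ℝ (e (angleTan u b)) (e (angleTan u a)) := by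
    rw [← image_segment, segment_eq_Icc (hbw.trans hwa)]
    exact mem_image_of_mem e ⟨hbw, hwa⟩
  have hew : e (angleTan u w) ∈ C :=
    C.convex.segment_subset (he_mem hb (subset_hull (by simp))) (he_mem ha (subset_hull (by simp)))
      hseg
  rw [← C.smul_mem_iff huu, ← smul_lineMap_angleTan hw.ne']
  exact C.smul_mem hw.le hew

lemma exists_hull_range_eq_hull_pair {ι : Type*} [Finite ι] [Nonempty ι] (c : ι → Fin 2 → ℝ)
    (hu : ∀ i, 0 < u ⬝ᵥ c i) : ∃ i j, hull ℝ (range c) = hull ℝ {c i, c j} := by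
  obtain ⟨i, hi⟩ := Finite.exists_max (angleTan u ∘ c)
  obtain ⟨j, hj⟩ := Finite.exists_min (angleTan u ∘ c)
  refine ⟨i, j, le_antisymm ?_ (Submodule.span_mono ?_)⟩
  · exact Submodule.span_le.2 <| range_subset_iff.2 fun k ↦
      mem_hull_pair_of_angleTan_mem_Icc (hu i) (hu j) (hu k) (hj k) (hi k)
  · exact insert_subset (mem_range_self i) (singleton_subset_iff.2 (mem_range_self j))

end Plane

/-- Theorem 4.5, existential form: in ℝ², every MOLP whose gradients lie in a common
open half-plane is equivalent to a two-objective problem with the same efficient set. -/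
theorem exists_two_objective_equivalent {K : ℕ} (hK : 1 ≤ K) (S : Set (Fin 2 → ℝ))
    (c : Fin K → (Fin 2 → ℝ)) (u : Fin 2 → ℝ) (hu : ∀ k, 0 < u ⬝ᵥ c k) :
    ∃ k₁ k₂ : Fin K,
      {x | Efficient S c x} = {x | Efficient S ![c k₁, c k₂] x} := by
  have : Nonempty (Fin K) := ⟨⟨0, hK⟩⟩
  obtain ⟨k₁, k₂, hpair⟩ := exists_hull_range_eq_hull_pair c hu
  refine ⟨k₁, k₂, ?_⟩
  rw [efficient_eq_of_hull_eq S (d := ![c k₁, c k₂]) (by rw [hpair, range_cons_cons_empty])]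
end

section
/- Let V ⊆ ℝ² be a nonempty finite set, let S = convexHull(V), and let c₁, …, c_K ∈ ℝ². Then the set of points of S that are efficient for the family (c₁, …, c_K) is a connected subset of ℝ². -/
open Matrix

open Finset
set_option maxHeartbeats 1000000
open scoped InnerProductSpace

/-- The cone generated by finitely many vectors, as nonnegative combinations. -/
def coneOf {E : Type*} [AddCommMonoid E] [Module ℝ E] {m : ℕ} (g : Fin m → E) : Set E :=
  {x | ∃ μ : Fin m → ℝ, (∀ i, 0 ≤ μ i) ∧ ∑ i, μ i • g i = x}

theorem coneOf_isClosed {E : Type*} [NormedAddCommGroup E] [NormedSpace ℝ E]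
    [FiniteDimensional ℝ E] : ∀ (m : ℕ) (g : Fin m → E), IsClosed (coneOf g) := by
  intro m
  induction m using Nat.strong_induction_on with
  | _ m IH =>
  intro g
  by_cases hg : LinearIndependent ℝ g
  · -- independent case: closed embedding
    let L : (Fin m → ℝ) →ₗ[ℝ] E :=
      { toFun := fun μ => ∑ i, μ i • g i
        map_add' := by
          intro a b
          simp [add_smul, Finset.sum_add_distrib]
        map_smul' := by
          intro r a
          simp [Finset.smul_sum, smul_smul] }
    have hker : LinearMap.ker L = ⊥ := by
      rw [LinearMap.ker_eq_bot']
      intro μ hμ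
      have := Fintype.linearIndependent_iff.mp hg μ hμ
      funext i; exact this i
    have hce := LinearMap.isClosedEmbedding_of_injective (f := L) hker
    have heq : coneOf g = L '' {μ : Fin m → ℝ | ∀ i, 0 ≤ μ i} := by
      ext x
      constructor
      · rintro ⟨μ, hμ, rfl⟩; exact ⟨μ, hμ, rfl⟩
      · rintro ⟨μ, hμ, rfl⟩; exact ⟨μ, hμ, rfl⟩
    rw [heq]
    apply hce.isClosedMap
    have heq2 : {μ : Fin m → ℝ | ∀ i, 0 ≤ μ i}
        = ⋂ i, (fun μ : Fin m → ℝ => μ i) ⁻¹' (Set.Ici 0) := by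
      ext μ; simp [Set.mem_iInter]
    rw [heq2]
    exact isClosed_iInter fun i => isClosed_Ici.preimage (continuous_apply i)
  · -- dependent case
    obtain ⟨ν₀, hrel₀, i₁, hi₁⟩ := Fintype.not_linearIndependent_iff.mp hg
    obtain ⟨ν, hrel, hpos⟩ : ∃ ν : Fin m → ℝ, ∑ i, ν i • g i = 0 ∧ ∃ i, 0 < ν i := by
      rcases lt_or_gt_of_ne hi₁ with h | h
      · refine ⟨-ν₀, ?_, ⟨i₁, by simpa using h⟩⟩
        simpa [neg_smul] using congrArg Neg.neg hrel₀
      · exact ⟨ν₀, hrel₀, ⟨i₁, h⟩⟩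
    obtain ⟨n, rfl⟩ : ∃ n, m = n + 1 := ⟨m - 1, by have := i₁.pos; omega⟩
    clear hrel₀ hi₁
    have hunion : coneOf g =
        ⋃ i₀ : Fin (n + 1), (if 0 < ν i₀ then coneOf (g ∘ i₀.succAbove) else ∅) := by
      ext x
      constructor
      · rintro ⟨μ, hμ, rfl⟩
        have hTne : (Finset.univ.filter (fun i => 0 < ν i)).Nonempty :=
          ⟨hpos.choose, by simp [hpos.choose_spec]⟩
        obtain ⟨i₀, hi₀mem, hi₀min⟩ :=
          Finset.exists_min_image _ (fun i => μ i / ν i) hTne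
        have hνi₀ : 0 < ν i₀ := (Finset.mem_filter.mp hi₀mem).2
        set t : ℝ := μ i₀ / ν i₀ with ht
        have ht0 : 0 ≤ t := div_nonneg (hμ i₀) hνi₀.le
        set μ' : Fin (n + 1) → ℝ := fun i => μ i - t * ν i with hμ'
        have hμ'0 : ∀ i, 0 ≤ μ' i := by
          intro i
          by_cases hνi : 0 < ν i
          · have h1 := hi₀min i (Finset.mem_filter.mpr ⟨Finset.mem_univ i, hνi⟩)
            have h2 : t * ν i ≤ μ i := by
              rw [← le_div_iff₀ hνi]; exact h1
            simpa [hμ'] using sub_nonneg.mpr h2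
          · have h2 : t * ν i ≤ μ i :=
              (mul_nonpos_of_nonneg_of_nonpos ht0 (not_lt.mp hνi)).trans (hμ i)
            simpa [hμ'] using sub_nonneg.mpr h2
        have hμ'i₀ : μ' i₀ = 0 := by
          simp only [hμ', ht]
          field_simp
          ring
        have hsum' : ∑ i, μ' i • g i = ∑ i, μ i • g i := by
          simp only [hμ', sub_smul, mul_smul, Finset.sum_sub_distrib]
          rw [← Finset.smul_sum, hrel, smul_zero, sub_zero]
        refine Set.mem_iUnion.mpr ⟨i₀, ?_⟩
        rw [if_pos hνi₀]
        refine ⟨fun j => μ' (i₀.succAbove j), fun j => hμ'0 _, ?_⟩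
        have h3 := Fin.sum_univ_succAbove (fun i => μ' i • g i) i₀
        rw [hμ'i₀, zero_smul, zero_add] at h3
        simp only [Function.comp_apply]
        rw [← h3]
        exact hsum'
      · intro hx
        obtain ⟨i₀, hi₀⟩ := Set.mem_iUnion.mp hx
        by_cases hνi₀ : 0 < ν i₀
        swap
        · rw [if_neg hνi₀] at hi₀; exact absurd hi₀ (Set.notMem_empty x)
        rw [if_pos hνi₀] at hi₀
        obtain ⟨μ, hμ, hsum⟩ := hi₀
        refine ⟨Fin.insertNth (α := fun _ => ℝ) i₀ 0 μ, ?_, ?_⟩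
        · intro i
          refine Fin.succAboveCases i₀ ?_ ?_ i
          · simp
          · intro j; simpa using hμ j
        · have h4 := Fin.sum_univ_succAbove
            (fun i => Fin.insertNth (α := fun _ => ℝ) i₀ 0 μ i • g i) i₀
          rw [h4]
          simpa [Fin.insertNth_apply_same, Fin.insertNth_apply_succAbove] using hsum
    rw [hunion]
    apply isClosed_iUnion_of_finite
    intro i₀
    by_cases h : 0 < ν i₀
    · rw [if_pos h]; exact IH n (by omega) _
    · rw [if_neg h]; exact isClosed_empty

theorem coneOf_mem {E : Type*} [AddCommMonoid E] [Module ℝ E] {m : ℕ} (g : Fin m → E)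
    (p : Fin m) : g p ∈ coneOf g := by
  classical
  refine ⟨Pi.single p 1, fun i => by simp [Pi.single_apply]; split <;> norm_num, ?_⟩
  simp [Pi.single_apply, ite_smul]

theorem euclid_sum_apply {K m : ℕ} (d : Fin m → EuclideanSpace ℝ (Fin K)) (b : Fin m → ℝ)
    (k' : Fin K) : (∑ i, b i • d i) k' = ∑ i, b i * d i k' := by
  have h : (∑ i, b i • d i) k' = (PiLp.proj (𝕜 := ℝ) 2 _ k') (∑ i, b i • d i) := rfl
  rw [h, map_sum]
  simp [PiLp.proj_apply]

theorem gordan {K m : ℕ} (d : Fin m → EuclideanSpace ℝ (Fin K))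
    (h : ∀ μ : Fin m → ℝ, (∀ i, 0 ≤ μ i) → (∀ k, 0 ≤ (∑ i, μ i • d i) k) →
      (∑ i, μ i • d i) = 0) :
    ∃ l : Fin K → ℝ, (∀ k, 0 < l k) ∧ ∀ i, ∑ k, l k * (d i k) ≤ 0 := by
  classical
  have hP : ∀ k : Fin K, ∃ l : EuclideanSpace ℝ (Fin K),
      (∀ j, 0 ≤ l j) ∧ 0 < l k ∧ ∀ i, ∑ j, l j * d i j ≤ 0 := by
    intro k
    by_contra hP
    push_neg at hP
    set g : Fin (K + m) → EuclideanSpace ℝ (Fin K) :=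
      Fin.append (fun j => EuclideanSpace.single j 1) (fun i => -d i) with hgdef
    let C : ConvexCone ℝ (EuclideanSpace ℝ (Fin K)) :=
      { carrier := coneOf g
        smul_mem' := by
          rintro a ha x ⟨μ, hμ, rfl⟩
          exact ⟨fun i => a * μ i, fun i => mul_nonneg ha.le (hμ i), by
            rw [Finset.smul_sum]; simp [smul_smul]⟩
        add_mem' := by
          rintro x ⟨μ, hμ, rfl⟩ y ⟨μ', hμ', rfl⟩
          exact ⟨fun i => μ i + μ' i, fun i => add_nonneg (hμ i) (hμ' i), by
            simp [add_smul, Finset.sum_add_distrib]⟩ }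
    have hCne : (C : Set (EuclideanSpace ℝ (Fin K))).Nonempty :=
      ⟨0, ⟨0, fun i => le_refl 0, by simp⟩⟩
    have hCcl : IsClosed (C : Set (EuclideanSpace ℝ (Fin K))) := coneOf_isClosed _ g
    let P : ProperCone ℝ (EuclideanSpace ℝ (Fin K)) :=
      { carrier := coneOf g
        add_mem' := fun hx hy => C.add_mem' hx hy
        zero_mem' := ⟨0, fun i => le_refl 0, by simp⟩
        smul_mem' := by
          rintro a x ⟨μ, hμ, rfl⟩
          exact ⟨fun i => (a : ℝ) * μ i, fun i => mul_nonneg a.2 (hμ i), by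
            rw [Finset.smul_sum]
            refine Finset.sum_congr rfl fun i _ => ?_
            show ((a : ℝ) * μ i) • g i = a • μ i • g i
            exact (smul_smul (a : ℝ) (μ i) (g i)).symm⟩
        isClosed' := hCcl }
    have hbi := ProperCone.innerDual_innerDual P
    -- every element of the dual of C is ≥ 0 coordinatewise, kills d's, and has l k ≤ 0
    have hdual : ∀ l ∈ ProperCone.innerDual (C : Set (EuclideanSpace ℝ (Fin K))),
        0 ≤ ⟪l, -(EuclideanSpace.single k (1:ℝ))⟫_ℝ := by
      intro l hl
      rw [ProperCone.mem_innerDual] at hl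
      have hl1 : ∀ j, 0 ≤ l j := by
        intro j
        have := hl (x := g (Fin.castAdd m j)) (coneOf_mem g _)
        simpa [hgdef, Fin.append_left, real_inner_comm,
          EuclideanSpace.inner_single_left] using this
      have hl3 : ∀ i, ∑ j, l j * d i j ≤ 0 := by
        intro i
        have := hl (x := g (Fin.natAdd K i)) (coneOf_mem g _)
        rw [hgdef, Fin.append_right, inner_neg_left, PiLp.inner_apply] at this
        simp only [RCLike.inner_apply, conj_trivial, neg_nonneg] at this
        calc ∑ j, l j * d i j = ∑ j, d i j * l j := by
              simp [mul_comm]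
          _ ≤ 0 := by simpa only [mul_comm] using this
      have hlk : l k ≤ 0 := by
        by_contra hlk
        obtain ⟨i, hi⟩ := hP l hl1 (lt_of_not_ge hlk)
        exact absurd (hl3 i) (not_le.mpr hi)
      rw [inner_neg_right, EuclideanSpace.inner_single_right]
      simpa using hlk
    have hmem : -(EuclideanSpace.single k (1:ℝ)) ∈ C := by
      have h' : -(EuclideanSpace.single k (1:ℝ)) ∈
          ProperCone.innerDual (ProperCone.innerDual (P : Set (EuclideanSpace ℝ (Fin K))) :
            Set (EuclideanSpace ℝ (Fin K))) := by
        rw [ProperCone.mem_innerDual]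
        intro l hl
        exact hdual l hl
      rw [hbi] at h'
      exact h'
    obtain ⟨μ, hμ, hsum⟩ := hmem
    set a : Fin K → ℝ := fun j => μ (Fin.castAdd m j) with hadef
    set b : Fin m → ℝ := fun i => μ (Fin.natAdd K i) with hbdef
    have hsplit : ∑ j, a j • EuclideanSpace.single j (1:ℝ) - ∑ i, b i • d i
        = -(EuclideanSpace.single k (1:ℝ)) := by
      rw [← hsum, Fin.sum_univ_add]
      simp [hgdef, Fin.append_left, Fin.append_right, sub_eq_add_neg,
        Finset.sum_neg_distrib]
      rfl
    have hv : ∀ k', (∑ i, b i • d i) k' = (if k' = k then (1:ℝ) else 0) + a k' := by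
      intro k'
      have h5 : (∑ j, a j • EuclideanSpace.single j (1:ℝ)) k' - (∑ i, b i • d i) k'
          = (-(EuclideanSpace.single k (1:ℝ)) : EuclideanSpace ℝ (Fin K)) k' :=
        congrFun (congrArg (fun z : EuclideanSpace ℝ (Fin K) => (z : Fin K → ℝ)) hsplit) k'
      rw [euclid_sum_apply, euclid_sum_apply] at h5
      have hn : (-(EuclideanSpace.single k (1:ℝ)) : EuclideanSpace ℝ (Fin K)) k'
          = -(if k' = k then (1:ℝ) else 0) := by
        have : (-(EuclideanSpace.single k (1:ℝ)) : EuclideanSpace ℝ (Fin K)) k'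
            = -((EuclideanSpace.single k (1:ℝ)) k') := rfl
        rw [this, EuclideanSpace.single_apply]
      rw [hn] at h5
      have ha' : ∑ j, a j * (EuclideanSpace.single j (1:ℝ)) k' = a k' := by
        simp [EuclideanSpace.single_apply, mul_ite]
      rw [ha'] at h5
      rw [euclid_sum_apply]
      linarith [h5]
    have hzero : (∑ i, b i • d i) = 0 := by
      apply h b (fun i => hμ _)
      intro k'
      rw [hv k']
      have h7 : 0 ≤ a k' := hμ _
      by_cases hk : k' = k
      · rw [if_pos hk]; linarith
      · rw [if_neg hk]; linarith
    have h9 : (∑ i, b i • d i) k = (if k = k then (1:ℝ) else 0) + a k := hv k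
    have h7 : 0 ≤ a k := hμ _
    rw [if_pos rfl, hzero] at h9
    have h10 : (0 : EuclideanSpace ℝ (Fin K)) k = 0 := rfl
    rw [h10] at h9
    linarith
  choose L hL1 hL2 hL3 using hP
  refine ⟨fun j => ∑ k, L k j, fun j => ?_, fun i => ?_⟩
  · exact Finset.sum_pos' (fun k _ => hL1 k j) ⟨j, Finset.mem_univ j, hL2 j⟩
  · have hcomm : ∑ j, (∑ k, L k j) * d i j = ∑ k, ∑ j, L k j * d i j := by
      rw [Finset.sum_comm]
      exact Finset.sum_congr rfl fun j _ => Finset.sum_mul _ _ _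
    rw [hcomm]
    exact Finset.sum_nonpos (fun k _ => hL3 k i)

open Matrix

theorem dot_sum_smul {m : ℕ} (u : Fin 2 → ℝ) (a : Fin m → ℝ) (v : Fin m → Fin 2 → ℝ) :
    u ⬝ᵥ (∑ i, a i • v i) = ∑ i, a i * (u ⬝ᵥ v i) := by
  simp only [dotProduct, Finset.sum_apply, Pi.smul_apply, smul_eq_mul, Finset.mul_sum]
  rw [Finset.sum_comm]
  refine Finset.sum_congr rfl fun i _ => Finset.sum_congr rfl fun j _ => by ring

/-- Theorem 2.7 of the paper (Yu–Zeleny): the efficient solution set of an MOLP over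
a compact convex polygon in ℝ² is connected. -/
theorem efficient_set_connected {K : ℕ} (V : Set (Fin 2 → ℝ)) (hV : V.Finite)
    (hVne : V.Nonempty) (c : Fin K → (Fin 2 → ℝ)) :
    IsConnected {x | Efficient (convexHull ℝ V) c x} := by
  classical
  set S : Set (Fin 2 → ℝ) := convexHull ℝ V with hSdef
  -- enumerate V
  set m : ℕ := hV.toFinset.card with hmdef
  set e : hV.toFinset ≃ Fin m := hV.toFinset.equivFin with hedef
  set v : Fin m → (Fin 2 → ℝ) := fun i => (e.symm i : Fin 2 → ℝ) with hvdef
  have hvV : ∀ i, v i ∈ V := fun i => hV.mem_toFinset.mp (e.symm i).2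
  have hvS : ∀ i, v i ∈ S := fun i => subset_convexHull ℝ V (hvV i)
  have hVv : ∀ w ∈ V, ∃ i, v i = w := by
    intro w hw
    refine ⟨e ⟨w, hV.mem_toFinset.mpr hw⟩, ?_⟩
    simp [hvdef]
  -- the scalarized objectives and their argmax sets
  set f : (Fin K → ℝ) → (Fin 2 → ℝ) → ℝ := fun l x => ∑ k, l k * (c k ⬝ᵥ x) with hfdef
  set M : (Fin K → ℝ) → Set (Fin 2 → ℝ) := fun l => {x | x ∈ S ∧ ∀ y ∈ S, f l y ≤ f l x}
    with hMdef
  set Λ : Set (Fin K → ℝ) := {l | ∀ k, 0 < l k} with hΛdef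
  have hScv : Convex ℝ S := convex_convexHull ℝ V
  have hScp : IsCompact S := hV.isCompact_convexHull ℝ
  have hSne : S.Nonempty := hVne.mono (subset_convexHull ℝ V)
  have hlin : ∀ l, IsLinearMap ℝ (f l) := by
    intro l
    constructor
    · intro x y
      simp only [hfdef, dotProduct_add, mul_add, Finset.sum_add_distrib]
    · intro a x
      simp only [hfdef, dotProduct_smul, smul_eq_mul, Finset.mul_sum]
      exact Finset.sum_congr rfl fun k _ => by ring
  have hcont2 : Continuous (fun p : (Fin K → ℝ) × (Fin 2 → ℝ) => f p.1 p.2) := by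
    apply continuous_finset_sum
    intro k _
    apply Continuous.mul
    · exact (continuous_apply k).comp continuous_fst
    · simp only [dotProduct]
      apply continuous_finset_sum
      intro i _
      exact continuous_const.mul ((continuous_apply i).comp continuous_snd)
  have hcont : ∀ l, Continuous (f l) := by
    intro l
    have : (f l) = (fun p : (Fin K → ℝ) × (Fin 2 → ℝ) => f p.1 p.2) ∘ (fun x => (l, x)) := rfl
    rw [this]
    exact hcont2.comp (Continuous.prodMk_right l)
  have hMne : ∀ l, (M l).Nonempty := by
    intro l
    obtain ⟨x, hxS, hxmax⟩ := hScp.exists_isMaxOn hSne (hcont l).continuousOn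
    exact ⟨x, hxS, fun y hy => hxmax hy⟩
  have hMcv : ∀ l, Convex ℝ (M l) := by
    intro l
    intro x hx y hy a b ha hb hab
    refine ⟨hScv hx.1 hy.1 ha hb hab, ?_⟩
    intro z hz
    have hfz : f l (a • x + b • y) = a * f l x + b * f l y := by
      rw [(hlin l).map_add, (hlin l).map_smul, (hlin l).map_smul]; rfl
    have h1 : a * f l z ≤ a * f l x := mul_le_mul_of_nonneg_left (hx.2 z hz) ha
    have h2 : b * f l z ≤ b * f l y := mul_le_mul_of_nonneg_left (hy.2 z hz) hb
    calc f l z = a * f l z + b * f l z := by rw [← add_mul, hab, one_mul]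
      _ ≤ a * f l x + b * f l y := add_le_add h1 h2
      _ = f l (a • x + b • y) := hfz.symm
  -- the key scalarization identity
  have key : {x | Efficient S c x} = ⋃ l ∈ Λ, M l := by
    apply Set.Subset.antisymm
    · rintro x ⟨hxS, hxe⟩
      set d : Fin m → EuclideanSpace ℝ (Fin K) :=
        fun i => WithLp.toLp 2 (fun k => c k ⬝ᵥ v i - c k ⬝ᵥ x) with hddef
      have hgord : ∀ μ : Fin m → ℝ, (∀ i, 0 ≤ μ i) →
          (∀ k, 0 ≤ (∑ i, μ i • d i) k) → (∑ i, μ i • d i) = 0 := by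
        intro μ hμ hpos
        set s : ℝ := ∑ i, μ i with hsdef
        have hs0 : 0 ≤ s := Finset.sum_nonneg fun i _ => hμ i
        rcases eq_or_lt_of_le hs0 with hs | hs
        · have hall : ∀ i ∈ Finset.univ, μ i = 0 :=
            (Finset.sum_eq_zero_iff_of_nonneg (fun i _ => hμ i)).mp hs.symm
          ext k
          rw [euclid_sum_apply]
          have : ∀ i ∈ Finset.univ, μ i * d i k = 0 := fun i hi => by
            rw [hall i hi, zero_mul]
          rw [Finset.sum_eq_zero this]
          rfl
        · set y : Fin 2 → ℝ := ∑ i, (μ i / s) • v i with hydef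
          have hyS : y ∈ S := by
            apply hScv.sum_mem (fun i _ => div_nonneg (hμ i) hs0)
            · rw [← Finset.sum_div]
              exact div_self (ne_of_gt hs)
            · exact fun i _ => hvS i
          have hone : ∑ i, μ i / s = 1 := by
            rw [← Finset.sum_div]; exact div_self (ne_of_gt hs)
          have hky : ∀ k, c k ⬝ᵥ y - c k ⬝ᵥ x = (∑ i, μ i • d i) k / s := by
            intro k
            calc c k ⬝ᵥ y - c k ⬝ᵥ x
                = ∑ i, (μ i / s) * (c k ⬝ᵥ v i) - (∑ i, μ i / s) * (c k ⬝ᵥ x) := by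
                  rw [hydef, dot_sum_smul, hone, one_mul]
              _ = ∑ i, (μ i / s) * (c k ⬝ᵥ v i - c k ⬝ᵥ x) := by
                  rw [Finset.sum_mul, ← Finset.sum_sub_distrib]
                  exact Finset.sum_congr rfl fun i _ => by ring
              _ = (∑ i, μ i * d i k) / s := by
                  rw [Finset.sum_div]
                  refine Finset.sum_congr rfl fun i _ => ?_
                  have hd : d i k = c k ⬝ᵥ v i - c k ⬝ᵥ x := rfl
                  rw [hd]; ring
              _ = (∑ i, μ i • d i) k / s := by rw [euclid_sum_apply]
          have hyd : ∀ k, c k ⬝ᵥ x ≤ c k ⬝ᵥ y := by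
            intro k
            have h1 := hky k
            have h2 : 0 ≤ (∑ i, μ i • d i) k / s := div_nonneg (hpos k) hs0
            linarith
          push_neg at hxe
          have hk2 : ∀ k, c k ⬝ᵥ y ≤ c k ⬝ᵥ x := hxe y hyS hyd
          ext k
          have h1 := hky k
          rw [eq_comm, div_eq_iff (ne_of_gt hs)] at h1
          have h2 := hk2 k
          have h3 := hyd k
          have h0 : (0 : EuclideanSpace ℝ (Fin K)) k = 0 := rfl
          rw [h0, h1]
          nlinarith [h2, h3]
      obtain ⟨l, hl, hld⟩ := gordan d hgord
      refine Set.mem_biUnion (show l ∈ Λ from hl) ⟨hxS, ?_⟩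
      have hvle : ∀ i, f l (v i) ≤ f l x := by
        intro i
        have hld' := hld i
        have hexp : ∑ k, l k * d i k = f l (v i) - f l x := by
          simp only [hfdef, hddef, PiLp.toLp_apply, mul_sub, Finset.sum_sub_distrib]
        rw [hexp] at hld'
        linarith
      intro y hy
      have hsub : S ⊆ {y | f l y ≤ f l x} := by
        apply convexHull_min ?_ (convex_halfSpace_le (hlin l) _)
        intro w hw
        obtain ⟨i, rfl⟩ := hVv w hw
        exact hvle i
      exact hsub hy
    · rintro x hx
      obtain ⟨l, hl, hxS, hxmax⟩ := by
        simpa using hx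
      refine ⟨hxS, ?_⟩
      rintro ⟨y, hyS, hle, k₀, hlt⟩
      have : f l x < f l y := by
        apply Finset.sum_lt_sum
        · exact fun k _ => mul_le_mul_of_nonneg_left (hle k) (hl k).le
        · exact ⟨k₀, Finset.mem_univ _, by
            exact mul_lt_mul_of_pos_left hlt (hl k₀)⟩
      exact absurd (hxmax y hyS) (not_le.mpr this)
  -- upper semicontinuity of the argmax map
  have husc : ∀ u : Set (Fin 2 → ℝ), IsOpen u → IsOpen {l | M l ⊆ u} := by
    intro u hu
    rw [← isClosed_compl_iff]
    have hset : {l | M l ⊆ u}ᶜ = {l | ∃ x ∈ M l, x ∉ u} := by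
      ext l; simp [Set.not_subset]
    rw [hset]
    apply IsSeqClosed.isClosed
    intro ln l hln hlim
    choose x hxM hxu using hln
    obtain ⟨z, hzS, φ, hφ, hzx⟩ := hScp.tendsto_subseq (fun n => (hxM n).1)
    refine ⟨z, ⟨hzS, ?_⟩, ?_⟩
    · intro y hyS
      have hpair : Filter.Tendsto (fun n => (ln (φ n), x (φ n))) Filter.atTop
          (nhds (l, z)) := ((hlim.comp hφ.tendsto_atTop).prodMk_nhds hzx)
      have t2 : Filter.Tendsto (fun n => f (ln (φ n)) (x (φ n))) Filter.atTop
          (nhds (f l z)) := (hcont2.tendsto (l, z)).comp hpair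
      have hpair1 : Filter.Tendsto (fun n => (ln (φ n), y)) Filter.atTop
          (nhds (l, y)) := ((hlim.comp hφ.tendsto_atTop).prodMk_nhds tendsto_const_nhds)
      have t1 : Filter.Tendsto (fun n => f (ln (φ n)) y) Filter.atTop
          (nhds (f l y)) := (hcont2.tendsto (l, y)).comp hpair1
      exact le_of_tendsto_of_tendsto' t1 t2 fun n => (hxM (φ n)).2 y hyS
    · exact hu.isClosed_compl.mem_of_tendsto hzx
        (Filter.Eventually.of_forall fun n => hxu (φ n))
  -- assemble: the union over the connected weight set Λ is connected
  have hΛcv : Convex ℝ Λ := by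
    intro a ha b hb p q hp hq hpq
    intro k
    rcases eq_or_lt_of_le hp with hp0 | hp0
    · have : q = 1 := by linarith
      simpa [← hp0, this] using hb k
    · rcases eq_or_lt_of_le hq with hq0 | hq0
      · have : p = 1 := by linarith
        simpa [← hq0, this] using ha k
      · have := add_pos (mul_pos hp0 (ha k)) (mul_pos hq0 (hb k))
        simpa using this
  have hΛne : (Λ : Set (Fin K → ℝ)).Nonempty := ⟨fun _ => 1, fun k => one_pos⟩
  rw [key]
  constructor
  · obtain ⟨x, hx⟩ := hMne (fun _ => 1)
    exact ⟨x, Set.mem_biUnion (show (fun _ => (1:ℝ)) ∈ Λ from fun k => one_pos) hx⟩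
  · intro u w hu hw hcov ⟨xu, hxuE, hxuu⟩ ⟨xw, hxwE, hxww⟩
    by_contra hempty
    rw [Set.not_nonempty_iff_eq_empty] at hempty
    have hMsub : ∀ l ∈ Λ, M l ⊆ ⋃ l' ∈ Λ, M l' := fun l hl => Set.subset_biUnion_of_mem hl
    have hdicho : ∀ l ∈ Λ, M l ⊆ u ∨ M l ⊆ w := by
      intro l hl
      by_contra hc
      push_neg at hc
      obtain ⟨hcu, hcw⟩ := hc
      obtain ⟨p, hpM, hpu⟩ := Set.not_subset.mp hcu
      obtain ⟨q, hqM, hqw⟩ := Set.not_subset.mp hcw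
      have hMpc : IsPreconnected (M l) := ((hMcv l).isPreconnected)
      have hMcover : M l ⊆ u ∪ w := (hMsub l hl).trans hcov
      have hq_u : q ∈ u := by
        rcases hMcover hqM with h | h
        · exact h
        · exact absurd h hqw
      have hp_w : p ∈ w := by
        rcases hMcover hpM with h | h
        · exact absurd h hpu
        · exact h
      obtain ⟨r, hr⟩ := hMpc u w hu hw hMcover ⟨q, hqM, hq_u⟩ ⟨p, hpM, hp_w⟩
      have : r ∈ (⋃ l' ∈ Λ, M l') ∩ (u ∩ w) :=
        ⟨hMsub l hl hr.1, hr.2⟩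
      rw [hempty] at this
      exact this
    obtain ⟨lu, hluΛ, hxuM⟩ := Set.mem_iUnion₂.mp hxuE
    obtain ⟨lw, hlwΛ, hxwM⟩ := Set.mem_iUnion₂.mp hxwE
    have hluu : M lu ⊆ u := by
      rcases hdicho lu hluΛ with h | h
      · exact h
      · exfalso
        have : xu ∈ (⋃ l' ∈ Λ, M l') ∩ (u ∩ w) := ⟨hxuE, hxuu, h hxuM⟩
        rw [hempty] at this
        exact this
    have hlww : M lw ⊆ w := by
      rcases hdicho lw hlwΛ with h | h
      · exfalso
        have : xw ∈ (⋃ l' ∈ Λ, M l') ∩ (u ∩ w) := ⟨hxwE, h hxwM, hxww⟩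
        rw [hempty] at this
        exact this
      · exact h
    have hΛpc : IsPreconnected Λ := hΛcv.isPreconnected
    obtain ⟨l', hl'⟩ := hΛpc {l | M l ⊆ u} {l | M l ⊆ w} (husc u hu) (husc w hw)
      (fun l hl => (hdicho l hl).imp id id)
      ⟨lu, hluΛ, hluu⟩ ⟨lw, hlwΛ, hlww⟩
    obtain ⟨r, hrM⟩ := hMne l'
    have : r ∈ (⋃ l'' ∈ Λ, M l'') ∩ (u ∩ w) :=
      ⟨hMsub l' hl'.1 hrM, hl'.2.1 hrM, hl'.2.2 hrM⟩
    rw [hempty] at this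
    exact this
end
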